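/- arXiv:2405.16053 — 3 statements merged into one kernel-verified Lean document; each statement's English description precedes it below -/
import Mathlib

section
/- For any two time indices t1 < t2 and any state-action pair (s,a), the difference of optimal finite-horizon discounted Q-values at stage h satisfies Q*_{t1,h}(s,a) - Q*_{t2,h}(s,a) ≤ (∑_{h'=h}^{H-1} γ^{h'-h}) B_r(t1,t2) + (r_max/(1-γ)) (∑_{h'=h}^{H-1} γ^{h'-h}) B_p(t1,t2). -/
/-- Difference between optimal finite-horizon discounted Q-values of two MDPs. -/
theorem stmt0 {S A : Type*} [Fintype S] [Fintype A] [Nonempty A]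
    (γ rmax Br Bp : ℝ) (hγ0 : 0 < γ) (hγ1 : γ < 1) (H : ℕ)
    (R1 R2 : S → A → ℝ) (P1 P2 : S → A → S → ℝ)
    (hP1nonneg : ∀ s a s', 0 ≤ P1 s a s')
    (hP2nonneg : ∀ s a s', 0 ≤ P2 s a s')
    (hP1sum : ∀ s a, ∑ s', P1 s a s' = 1)
    (hP2sum : ∀ s a, ∑ s', P2 s a s' = 1)
    (hR : ∀ s a, |R1 s a - R2 s a| ≤ Br)
    (hP : ∀ s a, ∑ s', |P1 s a s' - P2 s a s'| ≤ Bp)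
    (hr1 : ∀ s a, |R1 s a| ≤ rmax)
    (hr2 : ∀ s a, |R2 s a| ≤ rmax)
    (Q1 Q2 : ℕ → S → A → ℝ)
    (hQ1H : ∀ s a, Q1 H s a = 0)
    (hQ2H : ∀ s a, Q2 H s a = 0)
    (hQ1 : ∀ h, h < H → ∀ s a,
      Q1 h s a = R1 s a + γ * ∑ s', P1 s a s' *
        (Finset.univ.sup' Finset.univ_nonempty fun a' => Q1 (h + 1) s' a'))
    (hQ2 : ∀ h, h < H → ∀ s a,
      Q2 h s a = R2 s a + γ * ∑ s', P2 s a s' *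
        (Finset.univ.sup' Finset.univ_nonempty fun a' => Q2 (h + 1) s' a')) :
    ∀ h ≤ H, ∀ s a,
      Q1 h s a - Q2 h s a ≤
        (∑ i ∈ Finset.range (H - h), γ ^ i) * Br
          + rmax / (1 - γ) * (∑ i ∈ Finset.range (H - h), γ ^ i) * Bp := by
  intro h hh s₀ a₀
  have hA : (Finset.univ : Finset A).Nonempty := Finset.univ_nonempty
  have hrmax : 0 ≤ rmax := le_trans (abs_nonneg _) (hr1 s₀ a₀)
  have hBr : 0 ≤ Br := le_trans (abs_nonneg _) (hR s₀ a₀)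
  have hBp : 0 ≤ Bp := le_trans (Finset.sum_nonneg fun _ _ => abs_nonneg _) (hP s₀ a₀)
  have h1γ : 0 < 1 - γ := by linarith
  set M := rmax / (1 - γ) with hM
  have hM0 : 0 ≤ M := div_nonneg hrmax h1γ.le
  have hMγ : rmax + γ * M = M := by
    have : M * (1 - γ) = rmax := by rw [hM]; field_simp
    linear_combination -this
  -- uniform bound on Q values
  have key : ∀ (Q : ℕ → S → A → ℝ) (Rf : S → A → ℝ) (Pf : S → A → S → ℝ),
      (∀ s a, |Rf s a| ≤ rmax) → (∀ s a s', 0 ≤ Pf s a s') →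
      (∀ s a, ∑ s', Pf s a s' = 1) → (∀ s a, Q H s a = 0) →
      (∀ h', h' < H → ∀ s a, Q h' s a = Rf s a + γ * ∑ s', Pf s a s' *
        (Finset.univ.sup' hA fun a' => Q (h' + 1) s' a')) →
      ∀ n h', h' + n = H → ∀ s a, |Q h' s a| ≤ M := by
    intro Q Rf Pf hRf hPf hPs hQH' hQrec n
    induction n with
    | zero =>
      intro h' hE s a
      have : h' = H := by omega
      simp [this, hQH', hM0]
    | succ m ih =>
      intro h' hE s a
      have hlt : h' < H := by omega
      have hE' : (h' + 1) + m = H := by omega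
      have hV : ∀ s', |Finset.univ.sup' hA fun a' => Q (h' + 1) s' a'| ≤ M := by
        intro s'
        rw [abs_le]
        refine ⟨?_, Finset.sup'_le _ _ fun a' _ => ?_⟩
        · obtain ⟨a'⟩ := ‹Nonempty A›
          have h1 := ih (h' + 1) hE' s' a'
          rw [abs_le] at h1
          exact le_trans h1.1 (Finset.le_sup' _ (Finset.mem_univ a'))
        · have h1 := ih (h' + 1) hE' s' a'
          rw [abs_le] at h1
          exact h1.2
      rw [hQrec h' hlt s a]
      have hsum : |∑ s', Pf s a s' * (Finset.univ.sup' hA fun a' => Q (h' + 1) s' a')| ≤ M := by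
        calc |∑ s', Pf s a s' * (Finset.univ.sup' hA fun a' => Q (h' + 1) s' a')|
            ≤ ∑ s', |Pf s a s' * (Finset.univ.sup' hA fun a' => Q (h' + 1) s' a')| :=
              Finset.abs_sum_le_sum_abs _ _
          _ ≤ ∑ s', Pf s a s' * M := by
              refine Finset.sum_le_sum fun s' _ => ?_
              rw [abs_mul, abs_of_nonneg (hPf s a s')]
              exact mul_le_mul_of_nonneg_left (hV s') (hPf s a s')
          _ = M := by rw [← Finset.sum_mul, hPs s a, one_mul]
      calc |Rf s a + γ * ∑ s', Pf s a s' * (Finset.univ.sup' hA fun a' => Q (h' + 1) s' a')|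
          ≤ |Rf s a| + |γ * ∑ s', Pf s a s' * (Finset.univ.sup' hA fun a' => Q (h' + 1) s' a')| :=
            abs_add_le _ _
        _ ≤ rmax + γ * M := by
            rw [abs_mul, abs_of_pos hγ0]
            exact add_le_add (hRf s a) (mul_le_mul_of_nonneg_left hsum hγ0.le)
        _ = M := hMγ
  have key1 := key Q1 R1 P1 hr1 hP1nonneg hP1sum hQ1H hQ1
  -- main induction
  have main : ∀ n h', h' + n = H → ∀ s a,
      Q1 h' s a - Q2 h' s a ≤ (∑ i ∈ Finset.range n, γ ^ i) * Br
        + M * (∑ i ∈ Finset.range n, γ ^ i) * Bp := by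
    intro n
    induction n with
    | zero =>
      intro h' hE s a
      have : h' = H := by omega
      simp [this, hQ1H, hQ2H]
    | succ m ih =>
      intro h' hE s a
      have hlt : h' < H := by omega
      have hE' : (h' + 1) + m = H := by omega
      set c := ∑ i ∈ Finset.range m, γ ^ i with hc
      have hc0 : 0 ≤ c := Finset.sum_nonneg fun i _ => pow_nonneg hγ0.le i
      set V1 : S → ℝ := fun s' => Finset.univ.sup' hA fun a' => Q1 (h' + 1) s' a' with hV1def
      set V2 : S → ℝ := fun s' => Finset.univ.sup' hA fun a' => Q2 (h' + 1) s' a' with hV2def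
      set D := c * Br + M * c * Bp with hD
      have hV1b : ∀ s', |V1 s'| ≤ M := by
        intro s'
        rw [hV1def]
        rw [abs_le]
        refine ⟨?_, Finset.sup'_le _ _ fun a' _ => ?_⟩
        · obtain ⟨a'⟩ := ‹Nonempty A›
          have h1 := key1 m (h' + 1) hE' s' a'
          rw [abs_le] at h1
          exact le_trans h1.1 (Finset.le_sup' _ (Finset.mem_univ a'))
        · have h1 := key1 m (h' + 1) hE' s' a'
          rw [abs_le] at h1
          exact h1.2
      have hVdiff : ∀ s', V1 s' - V2 s' ≤ D := by
        intro s'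
        rw [sub_le_iff_le_add, hV1def]
        refine Finset.sup'_le _ _ fun a' _ => ?_
        have h1 := ih (h' + 1) hE' s' a'
        have h2 : Q2 (h' + 1) s' a' ≤ V2 s' := Finset.le_sup' _ (Finset.mem_univ a')
        simp only [hD]
        linarith
      have h1 : ∑ s', (P1 s a s' - P2 s a s') * V1 s' ≤ M * Bp := by
        calc ∑ s', (P1 s a s' - P2 s a s') * V1 s'
            ≤ ∑ s', |(P1 s a s' - P2 s a s') * V1 s'| :=
              Finset.sum_le_sum fun s' _ => le_abs_self _
          _ ≤ ∑ s', |P1 s a s' - P2 s a s'| * M := by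
              refine Finset.sum_le_sum fun s' _ => ?_
              rw [abs_mul]
              exact mul_le_mul_of_nonneg_left (hV1b s') (abs_nonneg _)
          _ = (∑ s', |P1 s a s' - P2 s a s'|) * M := by rw [Finset.sum_mul]
          _ ≤ Bp * M := mul_le_mul_of_nonneg_right (hP s a) hM0
          _ = M * Bp := mul_comm _ _
      have h2 : ∑ s', P2 s a s' * (V1 s' - V2 s') ≤ D := by
        calc ∑ s', P2 s a s' * (V1 s' - V2 s')
            ≤ ∑ s', P2 s a s' * D := Finset.sum_le_sum fun s' _ =>
              mul_le_mul_of_nonneg_left (hVdiff s') (hP2nonneg s a s')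
          _ = D := by rw [← Finset.sum_mul, hP2sum s a, one_mul]
      have hsplit : (∑ s', P1 s a s' * V1 s') - (∑ s', P2 s a s' * V2 s')
          = (∑ s', (P1 s a s' - P2 s a s') * V1 s') + ∑ s', P2 s a s' * (V1 s' - V2 s') := by
        rw [← Finset.sum_add_distrib, ← Finset.sum_sub_distrib]
        congr 1
        ext s'
        ring
      have hRd : R1 s a - R2 s a ≤ Br := le_trans (le_abs_self _) (hR s a)
      have hSdiff : (∑ s', P1 s a s' * V1 s') - (∑ s', P2 s a s' * V2 s') ≤ M * Bp + D := by
        rw [hsplit]; exact add_le_add h1 h2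
      have hgeom : ∑ i ∈ Finset.range (m + 1), γ ^ i = γ * c + 1 := geom_sum_succ
      rw [hQ1 h' hlt s a, hQ2 h' hlt s a, hgeom]
      have hstep : (R1 s a + γ * ∑ s', P1 s a s' * V1 s')
          - (R2 s a + γ * ∑ s', P2 s a s' * V2 s') ≤ Br + γ * (M * Bp + D) := by
        have := mul_le_mul_of_nonneg_left hSdiff hγ0.le
        linarith
      refine le_trans hstep ?_
      simp only [hD]
      have hMBp : γ * (M * Bp) ≤ M * Bp := by nlinarith
      nlinarith [mul_nonneg hM0 hBp]
  have := main (H - h) h (by omega) s₀ a₀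
  exact this
end

section
/- For any two time indices t1, t2, the sup-norm difference of optimal value functions satisfies ||V*_{t1} - V*_{t2}||_∞ ≤ ((1-γ^H)/(1-γ)) (B_r(t1,t2) + (r_max/(1-γ)) B_p(t1,t2)). -/
/-- Helper: sup' difference bound. -/
lemma sup'_abs_sub_le {α : Type*} (t : Finset α) (ht : t.Nonempty) (f g : α → ℝ) (c : ℝ)
    (h : ∀ a ∈ t, |f a - g a| ≤ c) : |t.sup' ht f - t.sup' ht g| ≤ c := by
  rw [abs_le]
  constructor
  · have : t.sup' ht g ≤ t.sup' ht f + c := by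
      apply Finset.sup'_le
      intro a ha
      have := (abs_le.mp (h a ha)).1
      have := Finset.le_sup' f ha
      linarith
    linarith
  · have : t.sup' ht f ≤ t.sup' ht g + c := by
      apply Finset.sup'_le
      intro a ha
      have := (abs_le.mp (h a ha)).2
      have := Finset.le_sup' g ha
      linarith
    linarith

/-- Sup-norm difference between optimal finite-horizon value functions of two MDPs. -/
theorem stmt1 {S A : Type*} [Fintype S] [Fintype A] [Nonempty A]
    (γ rmax Br Bp : ℝ) (hγ0 : 0 < γ) (hγ1 : γ < 1) (H : ℕ)
    (R1 R2 : S → A → ℝ) (P1 P2 : S → A → S → ℝ)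
    (hP1nonneg : ∀ s a s', 0 ≤ P1 s a s')
    (hP2nonneg : ∀ s a s', 0 ≤ P2 s a s')
    (hP1sum : ∀ s a, ∑ s', P1 s a s' = 1)
    (hP2sum : ∀ s a, ∑ s', P2 s a s' = 1)
    (hR : ∀ s a, |R1 s a - R2 s a| ≤ Br)
    (hP : ∀ s a, ∑ s', |P1 s a s' - P2 s a s'| ≤ Bp)
    (hr1 : ∀ s a, |R1 s a| ≤ rmax)
    (hr2 : ∀ s a, |R2 s a| ≤ rmax)
    (V1 V2 : ℕ → S → ℝ)
    (hV1H : ∀ s, V1 H s = 0)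
    (hV2H : ∀ s, V2 H s = 0)
    (hV1 : ∀ h, h < H → ∀ s,
      V1 h s = Finset.univ.sup' Finset.univ_nonempty fun a =>
        R1 s a + γ * ∑ s', P1 s a s' * V1 (h + 1) s')
    (hV2 : ∀ h, h < H → ∀ s,
      V2 h s = Finset.univ.sup' Finset.univ_nonempty fun a =>
        R2 s a + γ * ∑ s', P2 s a s' * V2 (h + 1) s') :
    ∀ s, |V1 0 s - V2 0 s| ≤
      (1 - γ ^ H) / (1 - γ) * (Br + rmax / (1 - γ) * Bp) := by
  intro s0
  have hγd : (0:ℝ) < 1 - γ := by linarith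
  have hγne : (1:ℝ) - γ ≠ 0 := ne_of_gt hγd
  obtain ⟨a0⟩ := ‹Nonempty A›
  have hBr : 0 ≤ Br := le_trans (abs_nonneg _) (hR s0 a0)
  have hBp : 0 ≤ Bp := le_trans (Finset.sum_nonneg fun _ _ => abs_nonneg _) (hP s0 a0)
  have hrm : 0 ≤ rmax := le_trans (abs_nonneg _) (hr1 s0 a0)
  set Vm := rmax / (1 - γ) with hVmdef
  have hVm0 : 0 ≤ Vm := div_nonneg hrm hγd.le
  -- bound on V2
  have hV2b : ∀ d h, h + d = H → ∀ s, |V2 h s| ≤ Vm := by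
    intro d
    induction d with
    | zero =>
      intro h hh s
      have : h = H := by omega
      subst this
      rw [hV2H]
      simpa using hVm0
    | succ d ih =>
      intro h hh s
      have hhH : h < H := by omega
      rw [hV2 h hhH s]
      have key : ∀ a : A, |R2 s a + γ * ∑ s', P2 s a s' * V2 (h + 1) s'| ≤ Vm := by
        intro a
        have h1 : |∑ s', P2 s a s' * V2 (h + 1) s'| ≤ Vm := by
          calc |∑ s', P2 s a s' * V2 (h + 1) s'|
              ≤ ∑ s', |P2 s a s' * V2 (h + 1) s'| := Finset.abs_sum_le_sum_abs _ _
            _ ≤ ∑ s', P2 s a s' * Vm := by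
                apply Finset.sum_le_sum
                intro s' _
                rw [abs_mul, abs_of_nonneg (hP2nonneg s a s')]
                exact mul_le_mul_of_nonneg_left (ih (h + 1) (by omega) s') (hP2nonneg s a s')
            _ = Vm := by rw [← Finset.sum_mul, hP2sum, one_mul]
        calc |R2 s a + γ * ∑ s', P2 s a s' * V2 (h + 1) s'|
            ≤ |R2 s a| + |γ * ∑ s', P2 s a s' * V2 (h + 1) s'| := abs_add_le _ _
          _ ≤ rmax + γ * Vm := by
              rw [abs_mul, abs_of_nonneg hγ0.le]
              exact add_le_add (hr2 s a) (mul_le_mul_of_nonneg_left h1 hγ0.le)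
          _ = Vm := by rw [hVmdef]; field_simp; ring
      rw [abs_le]
      constructor
      · have := (abs_le.mp (key a0)).1
        have := Finset.le_sup' (f := fun a => R2 s a + γ * ∑ s', P2 s a s' * V2 (h + 1) s')
          (Finset.mem_univ a0)
        linarith
      · apply Finset.sup'_le
        intro a _
        exact (abs_le.mp (key a)).2
  -- main recursion
  have hD : ∀ d h, h + d = H → ∀ s,
      |V1 h s - V2 h s| ≤ (1 - γ ^ d) / (1 - γ) * (Br + Vm * Bp) := by
    intro d
    induction d with
    | zero =>
      intro h hh s
      have : h = H := by omega
      subst this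
      rw [hV1H, hV2H]
      simp
    | succ d ih =>
      intro h hh s
      have hhH : h < H := by omega
      rw [hV1 h hhH s, hV2 h hhH s]
      apply sup'_abs_sub_le
      intro a _
      have hsum : |(∑ s', P1 s a s' * V1 (h + 1) s') - ∑ s', P2 s a s' * V2 (h + 1) s'|
          ≤ (1 - γ ^ d) / (1 - γ) * (Br + Vm * Bp) + Bp * Vm := by
        have heq : (∑ s', P1 s a s' * V1 (h + 1) s') - ∑ s', P2 s a s' * V2 (h + 1) s'
            = ∑ s', (P1 s a s' * (V1 (h + 1) s' - V2 (h + 1) s')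
              + (P1 s a s' - P2 s a s') * V2 (h + 1) s') := by
          rw [← Finset.sum_sub_distrib]
          apply Finset.sum_congr rfl
          intro s' _
          ring
        rw [heq]
        calc |∑ s', (P1 s a s' * (V1 (h + 1) s' - V2 (h + 1) s')
              + (P1 s a s' - P2 s a s') * V2 (h + 1) s')|
            ≤ ∑ s', |P1 s a s' * (V1 (h + 1) s' - V2 (h + 1) s')
              + (P1 s a s' - P2 s a s') * V2 (h + 1) s'| := Finset.abs_sum_le_sum_abs _ _
          _ ≤ ∑ s', (P1 s a s' * ((1 - γ ^ d) / (1 - γ) * (Br + Vm * Bp))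
              + |P1 s a s' - P2 s a s'| * Vm) := by
              apply Finset.sum_le_sum
              intro s' _
              calc |P1 s a s' * (V1 (h + 1) s' - V2 (h + 1) s')
                    + (P1 s a s' - P2 s a s') * V2 (h + 1) s'|
                  ≤ |P1 s a s' * (V1 (h + 1) s' - V2 (h + 1) s')|
                    + |(P1 s a s' - P2 s a s') * V2 (h + 1) s'| := abs_add_le _ _
                _ ≤ P1 s a s' * ((1 - γ ^ d) / (1 - γ) * (Br + Vm * Bp))
                    + |P1 s a s' - P2 s a s'| * Vm := by
                    rw [abs_mul, abs_mul, abs_of_nonneg (hP1nonneg s a s')]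
                    exact add_le_add
                      (mul_le_mul_of_nonneg_left (ih (h + 1) (by omega) s') (hP1nonneg s a s'))
                      (mul_le_mul_of_nonneg_left (hV2b (d) (h+1) (by omega) s') (abs_nonneg _))
          _ ≤ (1 - γ ^ d) / (1 - γ) * (Br + Vm * Bp) + Bp * Vm := by
              rw [Finset.sum_add_distrib, ← Finset.sum_mul, hP1sum, one_mul, ← Finset.sum_mul]
              exact add_le_add le_rfl (mul_le_mul_of_nonneg_right (hP s a) hVm0)
      have habs : |(R1 s a + γ * ∑ s', P1 s a s' * V1 (h + 1) s')
          - (R2 s a + γ * ∑ s', P2 s a s' * V2 (h + 1) s')|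
          ≤ Br + γ * ((1 - γ ^ d) / (1 - γ) * (Br + Vm * Bp) + Bp * Vm) := by
        have : (R1 s a + γ * ∑ s', P1 s a s' * V1 (h + 1) s')
            - (R2 s a + γ * ∑ s', P2 s a s' * V2 (h + 1) s')
            = (R1 s a - R2 s a) + γ * ((∑ s', P1 s a s' * V1 (h + 1) s')
              - ∑ s', P2 s a s' * V2 (h + 1) s') := by ring
        rw [this]
        calc _ ≤ |R1 s a - R2 s a| + |γ * ((∑ s', P1 s a s' * V1 (h + 1) s')
              - ∑ s', P2 s a s' * V2 (h + 1) s')| := abs_add_le _ _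
          _ ≤ Br + γ * ((1 - γ ^ d) / (1 - γ) * (Br + Vm * Bp) + Bp * Vm) := by
              rw [abs_mul, abs_of_nonneg hγ0.le]
              exact add_le_add (hR s a) (mul_le_mul_of_nonneg_left hsum hγ0.le)
      refine habs.trans ?_
      have hVmBp : γ * (Bp * Vm) ≤ Bp * Vm :=
        mul_le_of_le_one_left (mul_nonneg hBp hVm0) hγ1.le
      have hform : (1 - γ ^ (d + 1)) / (1 - γ) * (Br + Vm * Bp)
          = (Br + Vm * Bp) + γ * ((1 - γ ^ d) / (1 - γ) * (Br + Vm * Bp)) := by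
        field_simp
        ring
      rw [hform]
      nlinarith [mul_nonneg hBp hVm0]
  exact hD H 0 (by omega) s0
end

section
/- For any fixed policy π and two transition kernels P_{t1}, P_{t2} with max_{s,a}||P_{t2}(·|s,a)-P_{t1}(·|s,a)||_1 ≤ B_p, the discounted occupancy measures satisfy ∑_{(s,a)} |ρ^π_{t2}(s,a) - ρ^π_{t1}(s,a)| ≤ (∑_{h=0}^{H-1} γ^h h) B_p ≤ (γ/(1-γ)) ((1-γ^H)/(1-γ) - γ^{H-1} H) B_p. -/
/-!
Write `K₁, K₂` for the state-to-state transition matrices induced by `π`, so that the state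
distributions evolve by `μᵢ (h + 1) = μᵢ h ᵥ* Kᵢ`. Then
`μ₂ (h+1) - μ₁ (h+1) = (μ₂ h - μ₁ h) ᵥ* K₂ + μ₁ h ᵥ* (K₂ - K₁)`. Right multiplication by a
stochastic matrix does not increase the `ℓ¹` norm, and every row of `K₂ - K₁` has `ℓ¹` norm at
most `B_p`, so the `ℓ¹` distance of the state distributions grows by at most `B_p` per step.
Since `π(·|s)` is a probability vector, the occupancy measures are then `γ^h h B_p`-close at
step `h`. The closed form of `∑_{h<H} γ^h h` follows by multiplying with `(1 - γ)²`.
-/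

open Finset Matrix

theorem sum_range_pow_mul_mul_one_sub_sq {R : Type*} [CommRing R] (x : R) (n : ℕ) :
    (∑ h ∈ range n, x ^ h * h) * (1 - x) ^ 2 = x * (1 - x ^ n) - (1 - x) * n * x ^ n := by
  induction n with
  | zero => simp
  | succ n ih =>
    rw [sum_range_succ, add_mul, ih]
    push_cast [pow_succ]
    ring

theorem sum_range_pow_mul_eq {K : Type*} [Field K] {x : K} (hx : x ≠ 1) (n : ℕ) :
    ∑ h ∈ range n, x ^ h * h = x / (1 - x) * ((1 - x ^ n) / (1 - x) - x ^ (n - 1) * n) := by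
  have hx' : 1 - x ≠ 0 := sub_ne_zero.mpr hx.symm
  rcases Nat.eq_zero_or_pos n with rfl | hn
  · simp
  have hpow : x * x ^ (n - 1) = x ^ n := by rw [← pow_succ', Nat.sub_add_cancel hn]
  field_simp
  linear_combination sum_range_pow_mul_mul_one_sub_sq x n + (1 - x) * (n : K) * hpow

theorem sum_abs_vecMul_le {α β : Type*} [Fintype α] [Fintype β] {M : Matrix α β ℝ} {B : ℝ}
    (hM : ∀ i, ∑ j, |M i j| ≤ B) (v : α → ℝ) :
    ∑ j, |(v ᵥ* M) j| ≤ B * ∑ i, |v i| :=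
  calc ∑ j, |(v ᵥ* M) j|
      ≤ ∑ j, ∑ i, |v i| * |M i j| :=
        sum_le_sum fun j _ => (abs_sum_le_sum_abs _ _).trans_eq (by simp only [abs_mul])
    _ = ∑ i, |v i| * ∑ j, |M i j| := by rw [sum_comm]; simp_rw [mul_sum]
    _ ≤ ∑ i, |v i| * B := sum_le_sum fun i _ => mul_le_mul_of_nonneg_left (hM i) (abs_nonneg _)
    _ = B * ∑ i, |v i| := by rw [← sum_mul, mul_comm]

theorem sum_abs_of_mem_stdSimplex {S : Type*} [Fintype S] {x : S → ℝ}
    (hx : x ∈ stdSimplex ℝ S) : ∑ i, |x i| = 1 := by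
  rw [← hx.2]
  exact sum_congr rfl fun i _ => abs_of_nonneg (hx.1 i)

section Stochastic

variable {S : Type*} [Fintype S] [DecidableEq S]

theorem sum_abs_row_of_mem_rowStochastic {K : Matrix S S ℝ} (hK : K ∈ rowStochastic ℝ S)
    (i : S) : ∑ j, |K i j| = 1 :=
  sum_abs_of_mem_stdSimplex ⟨fun _ => nonneg_of_mem_rowStochastic hK,
    sum_row_of_mem_rowStochastic hK i⟩

theorem vecMul_mem_stdSimplex {K : Matrix S S ℝ} (hK : K ∈ rowStochastic ℝ S) {x : S → ℝ}
    (hx : x ∈ stdSimplex ℝ S) : x ᵥ* K ∈ stdSimplex ℝ S := by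
  refine ⟨nonneg_vecMul_of_mem_rowStochastic hK hx.1, ?_⟩
  rw [← dotProduct_one,
    vecMul_dotProduct_one_eq_one_rowStochastic hK (by rw [dotProduct_one, hx.2])]

theorem sum_abs_vecMul_le_of_mem_rowStochastic {K : Matrix S S ℝ} (hK : K ∈ rowStochastic ℝ S)
    (v : S → ℝ) : ∑ j, |(v ᵥ* K) j| ≤ ∑ i, |v i| := by
  simpa using sum_abs_vecMul_le (fun i => (sum_abs_row_of_mem_rowStochastic hK i).le) v

theorem sum_abs_sub_le_of_vecMul_succ {K₁ K₂ : Matrix S S ℝ} {B : ℝ}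
    (hK₁ : K₁ ∈ rowStochastic ℝ S) (hK₂ : K₂ ∈ rowStochastic ℝ S)
    (hB : ∀ i, ∑ j, |K₂ i j - K₁ i j| ≤ B) {μ₁ μ₂ : ℕ → S → ℝ}
    (hμ₁ : μ₁ 0 ∈ stdSimplex ℝ S) (hμ₀ : μ₁ 0 = μ₂ 0)
    (hμ₁succ : ∀ h, μ₁ (h + 1) = μ₁ h ᵥ* K₁) (hμ₂succ : ∀ h, μ₂ (h + 1) = μ₂ h ᵥ* K₂)
    (h : ℕ) : ∑ s, |μ₂ h s - μ₁ h s| ≤ h * B := by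
  have hsimplex : ∀ h, μ₁ h ∈ stdSimplex ℝ S := by
    intro h
    induction h with
    | zero => exact hμ₁
    | succ n ih => rw [hμ₁succ]; exact vecMul_mem_stdSimplex hK₁ ih
  induction h with
  | zero => simp [hμ₀]
  | succ n ih =>
    have hsplit : μ₂ (n + 1) - μ₁ (n + 1) = (μ₂ n - μ₁ n) ᵥ* K₂ + μ₁ n ᵥ* (K₂ - K₁) := by
      rw [hμ₁succ, hμ₂succ, sub_vecMul, vecMul_sub]
      abel
    calc ∑ s, |μ₂ (n + 1) s - μ₁ (n + 1) s|
        ≤ ∑ s, |((μ₂ n - μ₁ n) ᵥ* K₂) s| + ∑ s, |(μ₁ n ᵥ* (K₂ - K₁)) s| := by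
          rw [← sum_add_distrib]
          refine sum_le_sum fun s _ => ?_
          change |(μ₂ (n + 1) - μ₁ (n + 1)) s| ≤ _
          rw [hsplit]
          exact abs_add_le _ _
      _ ≤ ∑ s, |μ₂ n s - μ₁ n s| + B * ∑ s, |μ₁ n s| :=
          add_le_add (sum_abs_vecMul_le_of_mem_rowStochastic hK₂ _) (sum_abs_vecMul_le hB _)
      _ ≤ (n + 1 : ℕ) * B := by
          rw [sum_abs_of_mem_stdSimplex (hsimplex n)]
          push_cast
          linarith

end Stochastic

section PolicyKernel

variable {S A : Type*} [Fintype S] [Fintype A]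

def policyKernel (π : S → A → ℝ) (P : S → A → S → ℝ) : Matrix S S ℝ :=
  of fun s s' => ∑ a, π s a * P s a s'

theorem vecMul_policyKernel_apply (π : S → A → ℝ) (P : S → A → S → ℝ) (μ : S → ℝ) (s : S) :
    (μ ᵥ* policyKernel π P) s = ∑ s', ∑ a, μ s' * π s' a * P s' a s := by
  simp only [vecMul, dotProduct, policyKernel, of_apply, mul_sum, mul_assoc]

theorem policyKernel_mem_rowStochastic [DecidableEq S] {π : S → A → ℝ} {P : S → A → S → ℝ}
    (hπ₀ : ∀ s a, 0 ≤ π s a) (hπ₁ : ∀ s, ∑ a, π s a = 1)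
    (hP₀ : ∀ s a s', 0 ≤ P s a s') (hP₁ : ∀ s a, ∑ s', P s a s' = 1) :
    policyKernel π P ∈ rowStochastic ℝ S := by
  refine mem_rowStochastic_iff_sum.mpr ⟨fun s s' => ?_, fun s => ?_⟩
  · exact sum_nonneg fun a _ => mul_nonneg (hπ₀ s a) (hP₀ s a s')
  · simp only [policyKernel, of_apply]
    rw [sum_comm]
    simp_rw [← mul_sum, hP₁, mul_one, hπ₁]

theorem sum_abs_policyKernel_sub_le {π : S → A → ℝ} {P₁ P₂ : S → A → S → ℝ} {B : ℝ}
    (hπ₀ : ∀ s a, 0 ≤ π s a) (hπ₁ : ∀ s, ∑ a, π s a = 1)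
    (hB : ∀ s a, ∑ s', |P₂ s a s' - P₁ s a s'| ≤ B) (s : S) :
    ∑ s', |policyKernel π P₂ s s' - policyKernel π P₁ s s'| ≤ B := by
  have hrow : ∀ s', policyKernel π P₂ s s' - policyKernel π P₁ s s'
      = (π s ᵥ* of fun a s' => P₂ s a s' - P₁ s a s') s' := fun s' => by
    simp only [policyKernel, vecMul, dotProduct, of_apply, mul_sub, sum_sub_distrib]
  simp_rw [hrow]
  calc _ ≤ B * ∑ a, |π s a| := sum_abs_vecMul_le (hB s) _
    _ = B := by rw [sum_abs_of_mem_stdSimplex ⟨hπ₀ s, hπ₁ s⟩, mul_one]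

end PolicyKernel

def occupancy {S A : Type*} (γ : ℝ) (H : ℕ) (μ : ℕ → S → ℝ) (π : S → A → ℝ) (s : S) (a : A) :
    ℝ :=
  ∑ h ∈ range H, γ ^ h * (μ h s * π s a)

theorem sum_abs_occupancy_sub_le {S A : Type*} [Fintype S] [Fintype A] {γ : ℝ} (hγ : 0 ≤ γ)
    (H : ℕ) {π : S → A → ℝ} (hπ₀ : ∀ s a, 0 ≤ π s a) (hπ₁ : ∀ s, ∑ a, π s a = 1)
    (μ₁ μ₂ : ℕ → S → ℝ) :
    ∑ s, ∑ a, |occupancy γ H μ₂ π s a - occupancy γ H μ₁ π s a|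
      ≤ ∑ h ∈ range H, γ ^ h * ∑ s, |μ₂ h s - μ₁ h s| :=
  calc ∑ s, ∑ a, |occupancy γ H μ₂ π s a - occupancy γ H μ₁ π s a|
      ≤ ∑ s, ∑ a, ∑ h ∈ range H, γ ^ h * (|μ₂ h s - μ₁ h s| * π s a) := by
        refine sum_le_sum fun s _ => sum_le_sum fun a _ => ?_
        rw [occupancy, occupancy, ← sum_sub_distrib]
        refine (abs_sum_le_sum_abs _ _).trans_eq (sum_congr rfl fun h _ => ?_)
        rw [← mul_sub, ← sub_mul, abs_mul, abs_mul, abs_of_nonneg (pow_nonneg hγ h),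
          abs_of_nonneg (hπ₀ s a)]
    _ = ∑ h ∈ range H, γ ^ h * ∑ s, |μ₂ h s - μ₁ h s| := by
        have hpolicy : ∀ s, ∑ a, ∑ h ∈ range H, γ ^ h * (|μ₂ h s - μ₁ h s| * π s a)
            = ∑ h ∈ range H, γ ^ h * |μ₂ h s - μ₁ h s| := fun s => by
          rw [sum_comm]
          simp_rw [← mul_sum, hπ₁, mul_one]
        rw [sum_congr rfl fun s _ => hpolicy s, sum_comm]
        simp_rw [mul_sum]

/-- Difference between truncated discounted occupancy measures of two kernels
under the same policy. -/
theorem stmt4 {S A : Type*} [Fintype S] [DecidableEq S] [Fintype A]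
    (γ : ℝ) (hγ0 : 0 < γ) (hγ1 : γ < 1) (H : ℕ)
    (π : S → A → ℝ) (P1 P2 : S → A → S → ℝ) (s0 : S) (Bp : ℝ)
    (hπ0 : ∀ s a, 0 ≤ π s a) (hπ1 : ∀ s, ∑ a, π s a = 1)
    (hP1nonneg : ∀ s a s', 0 ≤ P1 s a s')
    (hP2nonneg : ∀ s a s', 0 ≤ P2 s a s')
    (hP1sum : ∀ s a, ∑ s', P1 s a s' = 1)
    (hP2sum : ∀ s a, ∑ s', P2 s a s' = 1)
    (hBp : ∀ s a, ∑ s', |P2 s a s' - P1 s a s'| ≤ Bp)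
    (μ1 μ2 : ℕ → S → ℝ)
    (hμ10 : ∀ s, μ1 0 s = if s = s0 then 1 else 0)
    (hμ20 : ∀ s, μ2 0 s = if s = s0 then 1 else 0)
    (hμ1succ : ∀ h s, μ1 (h + 1) s = ∑ s', ∑ a, μ1 h s' * π s' a * P1 s' a s)
    (hμ2succ : ∀ h s, μ2 (h + 1) s = ∑ s', ∑ a, μ2 h s' * π s' a * P2 s' a s)
    (ρ1 ρ2 : S → A → ℝ)
    (hρ1 : ∀ s a, ρ1 s a = ∑ h ∈ Finset.range H, γ ^ h * (μ1 h s * π s a))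
    (hρ2 : ∀ s a, ρ2 s a = ∑ h ∈ Finset.range H, γ ^ h * (μ2 h s * π s a)) :
    (∑ s, ∑ a, |ρ2 s a - ρ1 s a| ≤ (∑ h ∈ Finset.range H, γ ^ h * h) * Bp) ∧
      (∑ h ∈ Finset.range H, γ ^ h * h) * Bp ≤
        γ / (1 - γ) * ((1 - γ ^ H) / (1 - γ) - γ ^ (H - 1) * H) * Bp := by
  have hμ₀ : μ1 0 = Pi.single s0 1 := funext fun s => by rw [hμ10, Pi.single_apply]
  have hdist : ∀ h, ∑ s, |μ2 h s - μ1 h s| ≤ h * Bp :=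
    sum_abs_sub_le_of_vecMul_succ
      (policyKernel_mem_rowStochastic hπ0 hπ1 hP1nonneg hP1sum)
      (policyKernel_mem_rowStochastic hπ0 hπ1 hP2nonneg hP2sum)
      (sum_abs_policyKernel_sub_le hπ0 hπ1 hBp) (hμ₀ ▸ single_mem_stdSimplex ℝ s0)
      (funext fun s => by rw [hμ10, hμ20])
      (fun h => funext fun s => by rw [hμ1succ, vecMul_policyKernel_apply])
      (fun h => funext fun s => by rw [hμ2succ, vecMul_policyKernel_apply])
  refine ⟨?_, by rw [sum_range_pow_mul_eq hγ1.ne H]⟩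
  calc ∑ s, ∑ a, |ρ2 s a - ρ1 s a|
      = ∑ s, ∑ a, |occupancy γ H μ2 π s a - occupancy γ H μ1 π s a| := by
        simp only [hρ1, hρ2, occupancy]
    _ ≤ ∑ h ∈ range H, γ ^ h * ∑ s, |μ2 h s - μ1 h s| :=
        sum_abs_occupancy_sub_le hγ0.le H hπ0 hπ1 μ1 μ2
    _ ≤ ∑ h ∈ range H, γ ^ h * (h * Bp) :=
        sum_le_sum fun h _ => mul_le_mul_of_nonneg_left (hdist h) (pow_nonneg hγ0.le h)
    _ = (∑ h ∈ range H, γ ^ h * h) * Bp := by simp_rw [sum_mul, mul_assoc]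
end
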